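/- arXiv:2404.04497 — 3 statements merged into one kernel-verified Lean document; each statement's English description precedes it below -/
import Mathlib

section
/- Let K > 0 and let S : ℝ → ℝ be differentiable such that S(t)·S′(t) ≤ −K·|S(t)| for all t ≥ 0. Then S(t) = 0 for every t ≥ |S(0)| / K. (The sliding variable converges to zero in finite time bounded by T* = |S(0)|/K and remains zero thereafter.) -/
/-!
Since `(S²)' = 2 S S' ≤ 0`, the square `S²` is nonincreasing, so once `S` vanishes it stays
zero. If `S t ≠ 0`, then `S` has no zero on `[0, t]`, and there `|S|` is differentiable with
`|S|' = S S' / |S| ≤ -K`; hence `|S t| ≤ |S 0| - K t`, which is `≤ 0` once `t ≥ |S 0| / K`.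
-/

open Set

theorem antitoneOn_sq_of_mul_deriv_nonpos {f : ℝ → ℝ} {D : Set ℝ} (hD : Convex ℝ D)
    (hf : Differentiable ℝ f) (h : ∀ x ∈ interior D, f x * deriv f x ≤ 0) :
    AntitoneOn (fun x => f x ^ 2) D := by
  refine antitoneOn_of_deriv_nonpos hD (hf.pow 2).continuous.continuousOn
    (hf.pow 2).differentiableOn fun x hx => ?_
  have hderiv : deriv (fun x => f x ^ 2) x = 2 * (f x * deriv f x) := by
    rw [((hf x).hasDerivAt.fun_pow 2).deriv]
    ring
  rw [hderiv]
  linarith [h x hx]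

theorem eq_zero_of_mul_deriv_nonpos {f : ℝ → ℝ} (hf : Differentiable ℝ f) {a b c : ℝ}
    (h : ∀ x ∈ Ioi a, f x * deriv f x ≤ 0) (hab : a ≤ b) (hbc : b ≤ c) (hb : f b = 0) :
    f c = 0 := by
  have hsq : f c ^ 2 ≤ f b ^ 2 :=
    antitoneOn_sq_of_mul_deriv_nonpos (convex_Ici a) hf (by rwa [interior_Ici])
      (mem_Ici.2 hab) (mem_Ici.2 (hab.trans hbc)) hbc
  rw [hb, zero_pow two_ne_zero] at hsq
  exact pow_eq_zero_iff two_ne_zero |>.1 (le_antisymm hsq (sq_nonneg _))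

theorem abs_sub_abs_le_of_mul_deriv_le {f : ℝ → ℝ} (hf : Differentiable ℝ f) {K a b : ℝ}
    (hab : a ≤ b) (hne : ∀ x ∈ Ioo a b, f x ≠ 0)
    (h : ∀ x ∈ Ioo a b, f x * deriv f x ≤ -K * |f x|) :
    |f b| - |f a| ≤ -K * (b - a) := by
  have hderiv : ∀ x ∈ Ioo a b,
      HasDerivAt (fun x => |f x|) (SignType.sign (f x) * deriv f x) x := fun x hx =>
    (hasDerivAt_abs (hne x hx)).comp x (hf x).hasDerivAt
  refine (convex_Icc a b).image_sub_le_mul_sub_of_deriv_le hf.continuous.abs.continuousOn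
    (fun x hx => ?_) (fun x hx => ?_) a (left_mem_Icc.2 hab) b (right_mem_Icc.2 hab) hab
  · rw [interior_Icc] at hx
    exact (hderiv x hx).differentiableAt.differentiableWithinAt
  · rw [interior_Icc] at hx
    rw [(hderiv x hx).deriv]
    have hpos : 0 < |f x| := abs_pos.2 (hne x hx)
    refine le_of_mul_le_mul_right ?_ hpos
    calc SignType.sign (f x) * deriv f x * |f x|
        = f x * deriv f x := by rw [mul_right_comm, sign_mul_abs]
      _ ≤ -K * |f x| := h x hx

/-- Finite-time convergence of the sliding variable: if S·S′ ≤ −K·|S| for all t ≥ 0,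
then S vanishes for every t ≥ |S(0)|/K and stays zero thereafter. -/
theorem stmt_8 (K : ℝ) (hK : 0 < K) (S : ℝ → ℝ) (hS : Differentiable ℝ S)
    (h : ∀ t : ℝ, 0 ≤ t → S t * deriv S t ≤ -K * |S t|) :
    ∀ t : ℝ, |S 0| / K ≤ t → S t = 0 := by
  intro t ht
  have hSK : |S 0| ≤ K * t := by rw [mul_comm]; exact (div_le_iff₀ hK).1 ht
  have ht0 : 0 ≤ t := (div_nonneg (abs_nonneg _) hK.le).trans ht
  have hdecay : ∀ x ∈ Ioi 0, S x * deriv S x ≤ 0 := fun x hx =>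
    (h x (le_of_lt hx)).trans (by nlinarith [abs_nonneg (S x)])
  by_contra hSt
  have hne : ∀ x ∈ Ioo 0 t, S x ≠ 0 := fun x hx hx0 =>
    hSt (eq_zero_of_mul_deriv_nonpos hS hdecay hx.1.le hx.2.le hx0)
  have hdrop := abs_sub_abs_le_of_mul_deriv_le hS ht0 hne fun x hx => h x hx.1.le
  linarith [abs_pos.2 hSt]
end

section
/- Let λ > 0, Δ > 0, and η > λ·Δ². Define ε = Δ·√(2·ln(η/(λ·Δ²))) and g(x) = −λ·x + (η/Δ²)·x·exp(−x²/(2·Δ²)). Then ε > 0, g(ε) = 0, g(x) > 0 for every x ∈ (0, ε), and g(x) < 0 for every x > ε. (On the sliding manifold with the repulsive term active and e_j = 0, the range error e_i increases below the safe offset ε and decreases above it, so e_i converges to e_j + ε, guaranteeing d_ij > 0.) -/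
/-- On the sliding manifold with the repulsive term active (and e_j = 0), the range
error increases below the safe offset ε and decreases above it, so it converges to ε. -/
theorem stmt_9 (lam η Δ : ℝ) (hlam : 0 < lam) (hΔ : 0 < Δ) (hη : lam * Δ ^ 2 < η) :
    0 < Δ * Real.sqrt (2 * Real.log (η / (lam * Δ ^ 2))) ∧
    (-lam * (Δ * Real.sqrt (2 * Real.log (η / (lam * Δ ^ 2)))) +
      (η / Δ ^ 2) * (Δ * Real.sqrt (2 * Real.log (η / (lam * Δ ^ 2)))) *
        Real.exp (-(Δ * Real.sqrt (2 * Real.log (η / (lam * Δ ^ 2)))) ^ 2 / (2 * Δ ^ 2)) = 0) ∧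
    (∀ x : ℝ, x ∈ Set.Ioo 0 (Δ * Real.sqrt (2 * Real.log (η / (lam * Δ ^ 2)))) →
      0 < -lam * x + (η / Δ ^ 2) * x * Real.exp (-x ^ 2 / (2 * Δ ^ 2))) ∧
    (∀ x : ℝ, Δ * Real.sqrt (2 * Real.log (η / (lam * Δ ^ 2))) < x →
      -lam * x + (η / Δ ^ 2) * x * Real.exp (-x ^ 2 / (2 * Δ ^ 2)) < 0) := by
  have hΔ2 : (0:ℝ) < Δ ^ 2 := by positivity
  have hden : 0 < lam * Δ ^ 2 := by positivity
  have hratio : 1 < η / (lam * Δ ^ 2) := (one_lt_div hden).mpr hη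
  have hL : 0 < Real.log (η / (lam * Δ ^ 2)) := Real.log_pos hratio
  set L := Real.log (η / (lam * Δ ^ 2)) with hLdef
  have h2L : 0 < 2 * L := by linarith
  have hsq : Real.sqrt (2 * L) ^ 2 = 2 * L := Real.sq_sqrt h2L.le
  set ε := Δ * Real.sqrt (2 * L) with hεdef
  have hεpos : 0 < ε := mul_pos hΔ (Real.sqrt_pos.mpr h2L)
  have hε2 : ε ^ 2 = Δ ^ 2 * (2 * L) := by
    rw [hεdef, mul_pow, hsq]
  have hηpos : 0 < η := lt_trans hden hη
  have hexpL : Real.exp (-L) = lam * Δ ^ 2 / η := by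
    rw [Real.exp_neg, hLdef, Real.exp_log (by positivity)]
    field_simp
  refine ⟨hεpos, ?_, ?_, ?_⟩
  · have : -(ε) ^ 2 / (2 * Δ ^ 2) = -L := by
      rw [hε2]; field_simp
    rw [this, hexpL]
    field_simp
    ring
  · intro x hx
    obtain ⟨hx0, hxε⟩ := hx
    have hxx : x ^ 2 < ε ^ 2 := by nlinarith
    have harg : -L < -x ^ 2 / (2 * Δ ^ 2) := by
      rw [hε2] at hxx
      rw [neg_div, neg_lt_neg_iff, div_lt_iff₀ (by positivity)]
      nlinarith
    have hexp : lam * Δ ^ 2 / η < Real.exp (-x ^ 2 / (2 * Δ ^ 2)) := by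
      rw [← hexpL]; exact Real.exp_lt_exp.mpr harg
    have key : lam < (η / Δ ^ 2) * Real.exp (-x ^ 2 / (2 * Δ ^ 2)) := by
      rw [div_lt_iff₀ hηpos] at hexp
      rw [div_mul_eq_mul_div, lt_div_iff₀ hΔ2]
      nlinarith
    nlinarith
  · intro x hεx
    have hx0 : 0 < x := lt_trans hεpos hεx
    have hxx : ε ^ 2 < x ^ 2 := by nlinarith
    have harg : -x ^ 2 / (2 * Δ ^ 2) < -L := by
      rw [hε2] at hxx
      rw [neg_div, neg_lt_neg_iff, lt_div_iff₀ (by positivity)]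
      nlinarith
    have hexp : Real.exp (-x ^ 2 / (2 * Δ ^ 2)) < lam * Δ ^ 2 / η := by
      rw [← hexpL]; exact Real.exp_lt_exp.mpr harg
    have key : (η / Δ ^ 2) * Real.exp (-x ^ 2 / (2 * Δ ^ 2)) < lam := by
      rw [lt_div_iff₀ hηpos] at hexp
      rw [div_mul_eq_mul_div, div_lt_iff₀ hΔ2]
      nlinarith
    nlinarith
end

section
/- Let v > 0, η > 0, Δ > 0, and K > η·v/Δ². Let x, w, S ∈ ℝ with |w| ≤ v and S ≠ 0, and set c = (η/Δ²)·exp(−x²/(2·Δ²))·(x²/Δ² − 1). Then S·(−K·sign(S) − c·w) ≤ −(K − η·v/Δ²)·|S| < 0. (Under the gain condition, the Lyapunov function V = S²/2 is strictly decreasing along the closed-loop sliding-variable dynamics, establishing finite-time reaching of the sliding manifold.) -/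
lemma exp_factor_abs_le (t : ℝ) (ht : 0 ≤ t) :
    |Real.exp (-(t / 2)) * (t - 1)| ≤ 1 := by
  have hpos : 0 < Real.exp (-(t / 2)) := Real.exp_pos _
  have hle1 : Real.exp (-(t / 2)) ≤ 1 := Real.exp_le_one_iff.mpr (by linarith)
  rw [abs_le]
  constructor
  · rcases le_or_gt 1 t with h | h
    · nlinarith
    · nlinarith
  · -- exp(-(t/2)) * (t-1) ≤ 1 ⟺ t - 1 ≤ exp(t/2)
    have h1 : t / 4 + 1 ≤ Real.exp (t / 4) := Real.add_one_le_exp _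
    have h2 : Real.exp (t / 4) ^ 2 = Real.exp (t / 2) := by
      rw [← Real.exp_nat_mul]; norm_num; ring_nf
    have h3 : (t / 4 + 1) ^ 2 ≤ Real.exp (t / 2) := by
      rw [← h2]
      exact pow_le_pow_left₀ (by linarith) h1 2
    have h4 : t - 1 ≤ Real.exp (t / 2) := by nlinarith [sq_nonneg (t / 4 - 1)]
    have h5 : Real.exp (-(t / 2)) * Real.exp (t / 2) = 1 := by
      rw [← Real.exp_add]; norm_num
    nlinarith

/-- Under the gain condition K > η·v/Δ², the Lyapunov function V = S²/2 is strictly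
decreasing along the closed-loop sliding-variable dynamics. -/
theorem stmt_15 (v η Δ K x w S : ℝ) (hv : 0 < v) (hη : 0 < η) (hΔ : 0 < Δ)
    (hK : η * v / Δ ^ 2 < K) (hw : |w| ≤ v) (hS : S ≠ 0) :
    S * (-K * Real.sign S -
        ((η / Δ ^ 2) * Real.exp (-x ^ 2 / (2 * Δ ^ 2)) * (x ^ 2 / Δ ^ 2 - 1)) * w) ≤
      -(K - η * v / Δ ^ 2) * |S| ∧
    -(K - η * v / Δ ^ 2) * |S| < 0 := by
  have hΔ2 : (0:ℝ) < Δ ^ 2 := by positivity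
  set t := x ^ 2 / Δ ^ 2 with ht
  have ht0 : 0 ≤ t := by positivity
  have hrw : -x ^ 2 / (2 * Δ ^ 2) = -(t / 2) := by
    rw [ht]; ring
  set c := (η / Δ ^ 2) * Real.exp (-x ^ 2 / (2 * Δ ^ 2)) * (t - 1) with hc
  have hcabs : |c| ≤ η / Δ ^ 2 := by
    have h1 := exp_factor_abs_le t ht0
    have : |c| = (η / Δ ^ 2) * |Real.exp (-(t / 2)) * (t - 1)| := by
      rw [hc, hrw, mul_assoc, abs_mul, abs_of_pos (by positivity : (0:ℝ) < η / Δ ^ 2)]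
    rw [this]
    calc (η / Δ ^ 2) * |Real.exp (-(t / 2)) * (t - 1)| ≤ (η / Δ ^ 2) * 1 := by
          exact mul_le_mul_of_nonneg_left h1 (by positivity)
      _ = η / Δ ^ 2 := mul_one _
  have hcw : |c * w| ≤ (η / Δ ^ 2) * v := by
    rw [abs_mul]
    exact mul_le_mul hcabs hw (abs_nonneg _) (by positivity)
  have hSabs : 0 < |S| := abs_pos.mpr hS
  have hfac : 0 < K - η * v / Δ ^ 2 := by linarith
  refine ⟨?_, ?_⟩
  · have hsign : S * Real.sign S = |S| := by
      rcases lt_or_gt_of_ne hS with h | h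
      · rw [Real.sign_of_neg h, abs_of_neg h]; ring
      · rw [Real.sign_of_pos h, abs_of_pos h]; ring
    have hbound : -(S * (c * w)) ≤ |S| * ((η / Δ ^ 2) * v) := by
      calc -(S * (c * w)) ≤ |S * (c * w)| := neg_le_abs _
        _ = |S| * |c * w| := abs_mul _ _
        _ ≤ |S| * ((η / Δ ^ 2) * v) :=
            mul_le_mul_of_nonneg_left hcw (abs_nonneg _)
    have : S * (-K * Real.sign S - c * w) = -K * |S| - S * (c * w) := by
      rw [← hsign]; ring
    rw [this]
    have : η * v / Δ ^ 2 = (η / Δ ^ 2) * v := by ring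
    rw [this]
    nlinarith
  · nlinarith
end
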